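/- arXiv:1405.4043 — 3 statements merged into one kernel-verified Lean document; each statement's English description precedes it below -/
import Mathlib

section
/- For a smooth two-parameter family h(ε, x, y) taking values in a matrix Lie group, the variation of the pullback integrand satisfies: the ε-derivative of w(h⁻¹h_x, h⁻¹h_y) equals dθ(h⁻¹h_x, h⁻¹h_y) where θ is the 1-form θ(X) = w(h⁻¹h_ε, X), using the identities (h⁻¹h_x)_ε = (h⁻¹h_ε)_x + [h⁻¹h_x, h⁻¹h_ε] and the 2-cocycle identity for w. -/
attribute [local instance] Matrix.normedAddCommGroup Matrix.normedSpace

theorem VCI_det_contDiff {m : ℕ} : ContDiff ℝ (⊤ : ℕ∞) (fun A : Matrix (Fin m) (Fin m) ℂ => A.det) := by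
  simp only [Matrix.det_apply, Units.smul_def, zsmul_eq_mul]
  apply ContDiff.sum
  intro σ _
  apply ContDiff.mul contDiff_const
  apply contDiff_prod
  intro i _
  exact (contDiff_apply ℝ ℂ i).comp (contDiff_apply ℝ _ (σ i))

theorem VCI_adj_contDiff {m : ℕ} :
    ContDiff ℝ (⊤ : ℕ∞) (fun A : Matrix (Fin m) (Fin m) ℂ => A.adjugate) := by
  refine contDiff_pi.mpr ?_
  intro i
  rw [contDiff_pi]
  intro j
  simp only [Matrix.adjugate_apply]
  apply VCI_det_contDiff.comp
  refine contDiff_pi.mpr ?_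
  intro i'
  rw [contDiff_pi]
  intro k
  simp only [Matrix.updateRow_apply]
  by_cases hij : i' = j
  · simp only [hij, if_true, if_pos rfl]; exact contDiff_const
  · simp only [hij, if_false]
    exact (contDiff_apply ℝ ℂ k).comp (contDiff_apply ℝ _ i')

/-- continuous bilinear map from a linear one, in finite dimensions -/
noncomputable def VCI_bil2 {M N P : Type*}
    [NormedAddCommGroup M] [NormedSpace ℝ M] [FiniteDimensional ℝ M]
    [NormedAddCommGroup N] [NormedSpace ℝ N] [FiniteDimensional ℝ N]
    [NormedAddCommGroup P] [NormedSpace ℝ P]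
    (B : M →ₗ[ℝ] N →ₗ[ℝ] P) : M →L[ℝ] N →L[ℝ] P :=
  LinearMap.toContinuousLinearMap
    { toFun := fun x => LinearMap.toContinuousLinearMap (B x)
      map_add' := by intros; ext; simp
      map_smul' := by intros; ext; simp }

@[simp] theorem VCI_bil2_apply {M N P : Type*}
    [NormedAddCommGroup M] [NormedSpace ℝ M] [FiniteDimensional ℝ M]
    [NormedAddCommGroup N] [NormedSpace ℝ N] [FiniteDimensional ℝ N]
    [NormedAddCommGroup P] [NormedSpace ℝ P]
    (B : M →ₗ[ℝ] N →ₗ[ℝ] P) (x : M) (y : N) : VCI_bil2 B x y = B x y := rfl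

/-- matrix multiplication as a real-bilinear CLM -/
noncomputable def VCI_mulL (m : ℕ) :
    Matrix (Fin m) (Fin m) ℂ →L[ℝ] Matrix (Fin m) (Fin m) ℂ →L[ℝ] Matrix (Fin m) (Fin m) ℂ :=
  VCI_bil2
    { toFun := fun X =>
        { toFun := fun Y => X * Y
          map_add' := fun Y Z => mul_add X Y Z
          map_smul' := fun r Y => mul_smul_comm r X Y }
      map_add' := fun X X' => by ext Y : 1; exact add_mul X X' Y
      map_smul' := fun r X => by ext Y : 1; exact smul_mul_assoc r X Y }

@[simp] theorem VCI_mulL_apply {m : ℕ} (X Y : Matrix (Fin m) (Fin m) ℂ) :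
    VCI_mulL m X Y = X * Y := rfl

/-- scalar multiplication as a real-bilinear CLM -/
noncomputable def VCI_smulL (m : ℕ) :
    ℂ →L[ℝ] Matrix (Fin m) (Fin m) ℂ →L[ℝ] Matrix (Fin m) (Fin m) ℂ :=
  VCI_bil2
    { toFun := fun c =>
        { toFun := fun Y => c • Y
          map_add' := fun Y Z => smul_add c Y Z
          map_smul' := fun r Y => smul_comm c r Y }
      map_add' := fun c c' => by ext Y : 1; exact add_smul c c' Y
      map_smul' := fun r c => by ext Y : 1; exact smul_assoc r c Y }

@[simp] theorem VCI_smulL_apply {m : ℕ} (c : ℂ) (Y : Matrix (Fin m) (Fin m) ℂ) :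
    VCI_smulL m c Y = c • Y := rfl

/-- restriction of scalars of the cocycle to a real CLM -/
noncomputable def VCI_wR {m : ℕ}
    (w : Matrix (Fin m) (Fin m) ℂ →ₗ[ℂ] Matrix (Fin m) (Fin m) ℂ →ₗ[ℂ] ℂ) :
    Matrix (Fin m) (Fin m) ℂ →L[ℝ] Matrix (Fin m) (Fin m) ℂ →L[ℝ] ℂ :=
  VCI_bil2
    { toFun := fun X => (w X).restrictScalars ℝ
      map_add' := fun X X' => by ext Y; simp
      map_smul' := fun r X => by ext Y; simp [w.map_smul_of_tower] }

@[simp] theorem VCI_wR_apply {m : ℕ}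
    (w : Matrix (Fin m) (Fin m) ℂ →ₗ[ℂ] Matrix (Fin m) (Fin m) ℂ →ₗ[ℂ] ℂ)
    (X Y : Matrix (Fin m) (Fin m) ℂ) : VCI_wR w X Y = w X Y := rfl

theorem VCI_inv_contDiff {m : ℕ} {E : Type*} [NormedAddCommGroup E] [NormedSpace ℝ E]
    {f : E → Matrix (Fin m) (Fin m) ℂ} (hf : ContDiff ℝ (⊤ : ℕ∞) f) (hu : ∀ p, IsUnit (f p)) :
    ContDiff ℝ (⊤ : ℕ∞) fun p => (f p)⁻¹ := by
  have hdet : ∀ p, (f p).det ≠ 0 := fun p => ((Matrix.isUnit_iff_isUnit_det _).mp (hu p)).ne_zero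
  have heq : (fun p => (f p)⁻¹) = fun p => VCI_smulL m ((f p).det)⁻¹ ((f p).adjugate) := by
    funext p
    rw [VCI_smulL_apply, Matrix.inv_def, Ring.inverse_eq_inv]
  rw [heq]
  exact (VCI_smulL m).isBoundedBilinearMap.contDiff.comp₂
    ((VCI_det_contDiff.comp hf).inv hdet) (VCI_adj_contDiff.comp hf)

theorem VCI_fderiv_bilin {E M N P : Type*} [NormedAddCommGroup E] [NormedSpace ℝ E]
    [NormedAddCommGroup M] [NormedSpace ℝ M] [NormedAddCommGroup N] [NormedSpace ℝ N]
    [NormedAddCommGroup P] [NormedSpace ℝ P]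
    (B : M →L[ℝ] N →L[ℝ] P) {F : E → M} {G : E → N} {p : E}
    (hF : DifferentiableAt ℝ F p) (hG : DifferentiableAt ℝ G p) (v : E) :
    fderiv ℝ (fun q => B (F q) (G q)) p v
      = B (fderiv ℝ F p v) (G p) + B (F p) (fderiv ℝ G p v) := by
  have hc : DifferentiableAt ℝ (fun q => B (F q)) p :=
    B.differentiable.differentiableAt.comp p hF
  rw [fderiv_clm_apply hc hG]
  have hc' : fderiv ℝ (fun q => B (F q)) p = B.comp (fderiv ℝ F p) :=
    (B.hasFDerivAt.comp p hF.hasFDerivAt).fderiv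
  rw [hc']
  simp only [ContinuousLinearMap.add_apply, ContinuousLinearMap.coe_comp',
    Function.comp_apply, ContinuousLinearMap.flip_apply]
  exact add_comm _ _

theorem VCI_slice1 {N : Type*} [NormedAddCommGroup N] [NormedSpace ℝ N]
    {F : ℝ × ℝ × ℝ → N} {a b c : ℝ} (hF : DifferentiableAt ℝ F (a, b, c)) :
    HasDerivAt (fun t => F (t, b, c)) (fderiv ℝ F (a, b, c) (1, 0, 0)) a := by
  have hc : HasDerivAt (fun t : ℝ => ((t, b, c) : ℝ × ℝ × ℝ)) (1, 0, 0) a :=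
    (hasDerivAt_id a).prodMk ((hasDerivAt_const a b).prodMk (hasDerivAt_const a c))
  exact hF.hasFDerivAt.comp_hasDerivAt a hc

theorem VCI_slice2 {N : Type*} [NormedAddCommGroup N] [NormedSpace ℝ N]
    {F : ℝ × ℝ × ℝ → N} {a b c : ℝ} (hF : DifferentiableAt ℝ F (a, b, c)) :
    HasDerivAt (fun t => F (a, t, c)) (fderiv ℝ F (a, b, c) (0, 1, 0)) b := by
  have hc : HasDerivAt (fun t : ℝ => ((a, t, c) : ℝ × ℝ × ℝ)) (0, 1, 0) b :=
    (hasDerivAt_const b a).prodMk ((hasDerivAt_id b).prodMk (hasDerivAt_const b c))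
  exact hF.hasFDerivAt.comp_hasDerivAt b hc

theorem VCI_slice3 {N : Type*} [NormedAddCommGroup N] [NormedSpace ℝ N]
    {F : ℝ × ℝ × ℝ → N} {a b c : ℝ} (hF : DifferentiableAt ℝ F (a, b, c)) :
    HasDerivAt (fun t => F (a, b, t)) (fderiv ℝ F (a, b, c) (0, 0, 1)) c := by
  have hc : HasDerivAt (fun t : ℝ => ((a, b, t) : ℝ × ℝ × ℝ)) (0, 0, 1) c :=
    (hasDerivAt_const c a).prodMk ((hasDerivAt_const c b).prodMk (hasDerivAt_id c))
  exact hF.hasFDerivAt.comp_hasDerivAt c hc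

theorem VCI_K_contDiff {m : ℕ} {G : ℝ × ℝ × ℝ → Matrix (Fin m) (Fin m) ℂ}
    (hG : ContDiff ℝ (⊤ : ℕ∞) G) (hu : ∀ p, IsUnit (G p)) (v : ℝ × ℝ × ℝ) :
    ContDiff ℝ (⊤ : ℕ∞) (fun p => (G p)⁻¹ * fderiv ℝ G p v) := by
  have h1 : (fun p => (G p)⁻¹ * fderiv ℝ G p v)
      = fun p => VCI_mulL m ((G p)⁻¹) (fderiv ℝ G p v) := rfl
  rw [h1]
  exact (VCI_mulL m).isBoundedBilinearMap.contDiff.comp₂ (VCI_inv_contDiff hG hu)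
    ((hG.fderiv_right (by simp)).clm_apply contDiff_const)

theorem VCI_pair_contDiff {m : ℕ}
    (w : Matrix (Fin m) (Fin m) ℂ →ₗ[ℂ] Matrix (Fin m) (Fin m) ℂ →ₗ[ℂ] ℂ)
    {G : ℝ × ℝ × ℝ → Matrix (Fin m) (Fin m) ℂ}
    (hG : ContDiff ℝ (⊤ : ℕ∞) G) (hu : ∀ p, IsUnit (G p)) (u v : ℝ × ℝ × ℝ) :
    ContDiff ℝ (⊤ : ℕ∞) (fun p =>
      w ((G p)⁻¹ * fderiv ℝ G p u) ((G p)⁻¹ * fderiv ℝ G p v)) := by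
  have h1 : (fun p => w ((G p)⁻¹ * fderiv ℝ G p u) ((G p)⁻¹ * fderiv ℝ G p v))
      = fun p => VCI_wR w ((G p)⁻¹ * fderiv ℝ G p u) ((G p)⁻¹ * fderiv ℝ G p v) := rfl
  rw [h1]
  exact (VCI_wR w).isBoundedBilinearMap.contDiff.comp₂
    (VCI_K_contDiff hG hu u) (VCI_K_contDiff hG hu v)

theorem VCI_main {m : ℕ}
    (w : Matrix (Fin m) (Fin m) ℂ →ₗ[ℂ] Matrix (Fin m) (Fin m) ℂ →ₗ[ℂ] ℂ)
    (hskew : ∀ X Y, w X Y = - w Y X)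
    (hcocycle : ∀ X Y Z, w (X * Y - Y * X) Z + w (Y * Z - Z * Y) X +
      w (Z * X - X * Z) Y = 0)
    (G : ℝ × ℝ × ℝ → Matrix (Fin m) (Fin m) ℂ)
    (hG : ContDiff ℝ (⊤ : ℕ∞) G) (hu : ∀ p, IsUnit (G p)) (p0 : ℝ × ℝ × ℝ) :
    fderiv ℝ (fun p => w ((G p)⁻¹ * fderiv ℝ G p (0,1,0)) ((G p)⁻¹ * fderiv ℝ G p (0,0,1))) p0 (1,0,0)
    = fderiv ℝ (fun p => w ((G p)⁻¹ * fderiv ℝ G p (1,0,0)) ((G p)⁻¹ * fderiv ℝ G p (0,0,1))) p0 (0,1,0)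
    - fderiv ℝ (fun p => w ((G p)⁻¹ * fderiv ℝ G p (1,0,0)) ((G p)⁻¹ * fderiv ℝ G p (0,1,0))) p0 (0,0,1) := by
  have hGd : Differentiable ℝ G := hG.differentiable (by simp)
  have hivd : Differentiable ℝ (fun p => (G p)⁻¹) :=
    (VCI_inv_contDiff hG hu).differentiable (by simp)
  have hDd : ∀ v : ℝ × ℝ × ℝ, Differentiable ℝ (fun p => fderiv ℝ G p v) := fun v =>
    (((hG.fderiv_right (m := (⊤ : ℕ∞)) (by simp)).clm_apply contDiff_const)).differentiable (by simp)
  have hKd : ∀ v : ℝ × ℝ × ℝ, Differentiable ℝ (fun p => (G p)⁻¹ * fderiv ℝ G p v) :=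
    fun v => (VCI_K_contDiff hG hu v).differentiable (by simp)
  -- derivative of the inverse
  have hivder : ∀ p v, fderiv ℝ (fun q => (G q)⁻¹) p v
      = -((G p)⁻¹ * fderiv ℝ G p v * (G p)⁻¹) := by
    intro p v
    have h1 : (fun q => VCI_mulL m (G q) ((G q)⁻¹)) = fun _ => (1 : Matrix (Fin m) (Fin m) ℂ) := by
      funext q
      simpa using Matrix.mul_nonsing_inv _ ((Matrix.isUnit_iff_isUnit_det _).mp (hu q))
    have h2 : fderiv ℝ (fun q => VCI_mulL m (G q) ((G q)⁻¹)) p v = 0 := by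
      rw [h1]
      simp
    erw [VCI_fderiv_bilin (VCI_mulL m) (hGd p) (hivd p) v] at h2
    change _ * _ + _ * _ = (0 : Matrix (Fin m) (Fin m) ℂ) at h2
    have h3 : (G p)⁻¹ * G p = 1 :=
      Matrix.nonsing_inv_mul _ ((Matrix.isUnit_iff_isUnit_det _).mp (hu p))
    have h4 : G p * fderiv ℝ (fun q => (G q)⁻¹) p v = -(fderiv ℝ G p v * (G p)⁻¹) :=
      eq_neg_of_add_eq_zero_right h2
    calc fderiv ℝ (fun q => (G q)⁻¹) p v
        = ((G p)⁻¹ * G p) * fderiv ℝ (fun q => (G q)⁻¹) p v := by rw [h3, one_mul]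
      _ = (G p)⁻¹ * (G p * fderiv ℝ (fun q => (G q)⁻¹) p v) := by rw [mul_assoc]
      _ = (G p)⁻¹ * -(fderiv ℝ G p v * (G p)⁻¹) := by rw [h4]
      _ = -((G p)⁻¹ * fderiv ℝ G p v * (G p)⁻¹) := by rw [mul_neg, mul_assoc]
  -- derivative of K u = (G ·)⁻¹ * ∂_u G
  have hKder : ∀ u p v, fderiv ℝ (fun q => (G q)⁻¹ * fderiv ℝ G q u) p v
      = -(((G p)⁻¹ * fderiv ℝ G p v) * ((G p)⁻¹ * fderiv ℝ G p u))
        + (G p)⁻¹ * fderiv ℝ (fun q => fderiv ℝ G q u) p v := by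
    intro u p v
    have h0 := VCI_fderiv_bilin (VCI_mulL m) (hivd p) (hDd u p) v
    change fderiv ℝ (fun q => (G q)⁻¹ * fderiv ℝ G q u) p v = fderiv ℝ (fun q => (G q)⁻¹) p v * fderiv ℝ G p u + (G p)⁻¹ * fderiv ℝ (fun q => fderiv ℝ G q u) p v at h0
    rw [h0, hivder p v]
    simp only [neg_mul, mul_assoc]
  -- symmetry of second derivatives
  have hsymm : ∀ p u v, fderiv ℝ (fun q => fderiv ℝ G q u) p v
      = fderiv ℝ (fun q => fderiv ℝ G q v) p u := by
    intro p u v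
    have hd : DifferentiableAt ℝ (fderiv ℝ G) p :=
      ((hG.fderiv_right (m := (⊤ : ℕ∞)) (by simp)).differentiable (by simp)) p
    have e1 : ∀ r s : ℝ × ℝ × ℝ, fderiv ℝ (fun q => fderiv ℝ G q r) p s
        = fderiv ℝ (fderiv ℝ G) p s r := by
      intro r s
      erw [fderiv_clm_apply hd (differentiableAt_const r)]
      change fderiv ℝ G p (fderiv ℝ (fun _ : ℝ × ℝ × ℝ => r) p s) + fderiv ℝ (fderiv ℝ G) p s r = _
      simp
    rw [e1, e1]
    exact hG.contDiffAt.isSymmSndFDerivAt (by rw [minSmoothness_of_isRCLikeNormedField]; exact WithTop.coe_le_coe.mpr (le_top : (2 : ℕ∞) ≤ ⊤)) v u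
  -- Leibniz rule for the pairing
  have hder : ∀ u v p r, fderiv ℝ (fun q =>
        w ((G q)⁻¹ * fderiv ℝ G q u) ((G q)⁻¹ * fderiv ℝ G q v)) p r
      = w (fderiv ℝ (fun q => (G q)⁻¹ * fderiv ℝ G q u) p r) ((G p)⁻¹ * fderiv ℝ G p v)
        + w ((G p)⁻¹ * fderiv ℝ G p u) (fderiv ℝ (fun q => (G q)⁻¹ * fderiv ℝ G q v) p r) := by
    intro u v p r
    have h1 : (fun q => w ((G q)⁻¹ * fderiv ℝ G q u) ((G q)⁻¹ * fderiv ℝ G q v))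
        = fun q => VCI_wR w ((G q)⁻¹ * fderiv ℝ G q u) ((G q)⁻¹ * fderiv ℝ G q v) := rfl
    rw [h1]
    exact VCI_fderiv_bilin (VCI_wR w) (hKd u p) (hKd v p) r
  rw [hder, hder, hder]
  simp only [hKder]
  rw [hsymm p0 (0,1,0) (1,0,0), hsymm p0 (0,0,1) (1,0,0), hsymm p0 (0,0,1) (0,1,0)]
  set A := (G p0)⁻¹ * fderiv ℝ G p0 (0,1,0) with hA
  set B := (G p0)⁻¹ * fderiv ℝ G p0 (0,0,1) with hB
  set C := (G p0)⁻¹ * fderiv ℝ G p0 (1,0,0) with hC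
  set P := (G p0)⁻¹ * fderiv ℝ (fun q => fderiv ℝ G q (1,0,0)) p0 (0,1,0) with hP
  set Q := (G p0)⁻¹ * fderiv ℝ (fun q => fderiv ℝ G q (1,0,0)) p0 (0,0,1) with hQ
  set R := (G p0)⁻¹ * fderiv ℝ (fun q => fderiv ℝ G q (0,1,0)) p0 (0,0,1) with hR
  have hc := hcocycle C A B
  simp only [map_add, map_neg, map_sub, LinearMap.add_apply, LinearMap.neg_apply,
    LinearMap.sub_apply] at hc ⊢
  linear_combination (-1 : ℂ) * hc + hskew A Q - hskew A (C * B) + hskew C (A * B)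
    - hskew C (B * A)

/-- For a smooth two-parameter family `h(ε,x,y)` of invertible matrices and a
skew-symmetric 2-cocycle `w`, the `ε`-derivative of `w(h⁻¹h_x, h⁻¹h_y)` equals
`dθ(h⁻¹h_x, h⁻¹h_y) = ∂_x w(h⁻¹h_ε, h⁻¹h_y) - ∂_y w(h⁻¹h_ε, h⁻¹h_x)`,
where `θ(X) = w(h⁻¹h_ε, X)` (Cartan's formula, `[∂_x, ∂_y] = 0`). -/
theorem variation_of_cocycle_integrand {m : ℕ}
    (w : Matrix (Fin m) (Fin m) ℂ →ₗ[ℂ] Matrix (Fin m) (Fin m) ℂ →ₗ[ℂ] ℂ)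
    (hskew : ∀ X Y, w X Y = - w Y X)
    (hcocycle : ∀ X Y Z, w (X * Y - Y * X) Z + w (Y * Z - Z * Y) X +
      w (Z * X - X * Z) Y = 0)
    (h : ℝ → ℝ → ℝ → Matrix (Fin m) (Fin m) ℂ)
    (hsmooth : ContDiff ℝ (⊤ : ℕ∞) (fun p : ℝ × ℝ × ℝ => h p.1 p.2.1 p.2.2))
    (hinv : ∀ ε x y, IsUnit (h ε x y))
    (ε x y : ℝ) :
    deriv (fun t => w ((h t x y)⁻¹ * deriv (fun s => h t s y) x)
        ((h t x y)⁻¹ * deriv (fun s => h t x s) y)) ε =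
      deriv (fun s => w ((h ε s y)⁻¹ * deriv (fun t => h t s y) ε)
        ((h ε s y)⁻¹ * deriv (fun u => h ε s u) y)) x -
      deriv (fun s => w ((h ε x s)⁻¹ * deriv (fun t => h t x s) ε)
        ((h ε x s)⁻¹ * deriv (fun u => h ε u s) x)) y := by
  have hGd : Differentiable ℝ (fun p : ℝ × ℝ × ℝ => h p.1 p.2.1 p.2.2) :=
    hsmooth.differentiable (by simp)
  have hu : ∀ p : ℝ × ℝ × ℝ, IsUnit ((fun p : ℝ × ℝ × ℝ => h p.1 p.2.1 p.2.2) p) :=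
    fun p => hinv _ _ _
  have hd1 : ∀ t s u : ℝ, deriv (fun t' => h t' s u) t
      = fderiv ℝ (fun p : ℝ × ℝ × ℝ => h p.1 p.2.1 p.2.2) (t, s, u) (1, 0, 0) :=
    fun t s u => (VCI_slice1 (hGd (t, s, u))).deriv
  have hd2 : ∀ t s u : ℝ, deriv (fun s' => h t s' u) s
      = fderiv ℝ (fun p : ℝ × ℝ × ℝ => h p.1 p.2.1 p.2.2) (t, s, u) (0, 1, 0) :=
    fun t s u => (VCI_slice2 (hGd (t, s, u))).deriv
  have hd3 : ∀ t s u : ℝ, deriv (fun u' => h t s u') u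
      = fderiv ℝ (fun p : ℝ × ℝ × ℝ => h p.1 p.2.1 p.2.2) (t, s, u) (0, 0, 1) :=
    fun t s u => (VCI_slice3 (hGd (t, s, u))).deriv
  have hpd : ∀ u v : ℝ × ℝ × ℝ, Differentiable ℝ (fun p : ℝ × ℝ × ℝ =>
      w (((fun p : ℝ × ℝ × ℝ => h p.1 p.2.1 p.2.2) p)⁻¹
          * fderiv ℝ (fun p : ℝ × ℝ × ℝ => h p.1 p.2.1 p.2.2) p u)
        (((fun p : ℝ × ℝ × ℝ => h p.1 p.2.1 p.2.2) p)⁻¹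
          * fderiv ℝ (fun p : ℝ × ℝ × ℝ => h p.1 p.2.1 p.2.2) p v)) :=
    fun u v => (VCI_pair_contDiff w hsmooth hu u v).differentiable (by simp)
  have e1 : (fun t => w ((h t x y)⁻¹ * deriv (fun s => h t s y) x)
        ((h t x y)⁻¹ * deriv (fun s => h t x s) y))
      = fun t => w (((fun p : ℝ × ℝ × ℝ => h p.1 p.2.1 p.2.2) (t, x, y))⁻¹
          * fderiv ℝ (fun p : ℝ × ℝ × ℝ => h p.1 p.2.1 p.2.2) (t, x, y) (0, 1, 0))
        (((fun p : ℝ × ℝ × ℝ => h p.1 p.2.1 p.2.2) (t, x, y))⁻¹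
          * fderiv ℝ (fun p : ℝ × ℝ × ℝ => h p.1 p.2.1 p.2.2) (t, x, y) (0, 0, 1)) := by
    funext t
    rw [hd2 t x y, hd3 t x y]
  have e2 : (fun s => w ((h ε s y)⁻¹ * deriv (fun t => h t s y) ε)
        ((h ε s y)⁻¹ * deriv (fun u => h ε s u) y))
      = fun s => w (((fun p : ℝ × ℝ × ℝ => h p.1 p.2.1 p.2.2) (ε, s, y))⁻¹
          * fderiv ℝ (fun p : ℝ × ℝ × ℝ => h p.1 p.2.1 p.2.2) (ε, s, y) (1, 0, 0))
        (((fun p : ℝ × ℝ × ℝ => h p.1 p.2.1 p.2.2) (ε, s, y))⁻¹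
          * fderiv ℝ (fun p : ℝ × ℝ × ℝ => h p.1 p.2.1 p.2.2) (ε, s, y) (0, 0, 1)) := by
    funext s
    rw [hd1 ε s y, hd3 ε s y]
  have e3 : (fun s => w ((h ε x s)⁻¹ * deriv (fun t => h t x s) ε)
        ((h ε x s)⁻¹ * deriv (fun u => h ε u s) x))
      = fun s => w (((fun p : ℝ × ℝ × ℝ => h p.1 p.2.1 p.2.2) (ε, x, s))⁻¹
          * fderiv ℝ (fun p : ℝ × ℝ × ℝ => h p.1 p.2.1 p.2.2) (ε, x, s) (1, 0, 0))
        (((fun p : ℝ × ℝ × ℝ => h p.1 p.2.1 p.2.2) (ε, x, s))⁻¹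
          * fderiv ℝ (fun p : ℝ × ℝ × ℝ => h p.1 p.2.1 p.2.2) (ε, x, s) (0, 1, 0)) := by
    funext s
    rw [hd1 ε x s, hd2 ε x s]
  rw [e1, e2, e3]
  rw [(VCI_slice1 (hpd (0,1,0) (0,0,1) (ε, x, y))).deriv,
      (VCI_slice2 (hpd (1,0,0) (0,0,1) (ε, x, y))).deriv,
      (VCI_slice3 (hpd (1,0,0) (0,1,0) (ε, x, y))).deriv]
  exact VCI_main w hskew hcocycle _ hsmooth hu (ε, x, y)
end

section
/- Suppose h ∈ L_- commutes with J₁, f ∈ L_-, and V(t)f⁻¹ = M(t)⁻¹E(t), V(t)(fh)⁻¹ = M̃(t)⁻¹Ẽ(t) are the unique factorizations with M, M̃ ∈ L_-, E, Ẽ ∈ L_+. Then M̃ = Mh, hence M̃ J₁ M̃⁻¹ = M J₁ M⁻¹ and the formal inverse scattering solutions agree: u_{fh} = u_f. -/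
/-! Right multiplication of `f` by `h` gives `V (f h)⁻¹ = h⁻¹ V f⁻¹ = (M h)⁻¹ E`, since `h`
commutes with `V`; as `h ∈ L₋`, this is again an `L₋ × L₊` factorization, so uniqueness
forces `M̃ = M h`. Conjugating `J₁` by `M h` is conjugating by `M`, because `h` commutes
with `J₁`, so the dressed operators and hence the solutions coincide. -/

namespace Subgroup

variable {G : Type*} [Group G] {Lp Lm : Subgroup G}

theorem eq_of_inv_mul_eq_inv_mul (htriv : ∀ x, x ∈ Lp → x ∈ Lm → x = 1) {M M' E E' : G}
    (hM : M ∈ Lm) (hM' : M' ∈ Lm) (hE : E ∈ Lp) (hE' : E' ∈ Lp)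
    (hfac : M⁻¹ * E = M'⁻¹ * E') : M' = M := by
  have hquot : M' * M⁻¹ = E' * E⁻¹ := by
    simpa [mul_assoc] using congrArg (fun x => M' * x * E⁻¹) hfac
  refine mul_inv_eq_one.mp (htriv _ ?_ (mul_mem hM' (inv_mem hM)))
  exact hquot ▸ mul_mem hE' (inv_mem hE)

end Subgroup

theorem mul_inv_mul_right_eq_of_commute {G : Type*} [Group G] {V f h M E : G}
    (hhV : Commute h V) (hfac : V * f⁻¹ = M⁻¹ * E) :
    V * (f * h)⁻¹ = (M * h)⁻¹ * E := by
  rw [mul_inv_rev, mul_inv_rev, ← mul_assoc, hhV.inv_left.eq.symm, mul_assoc, hfac, mul_assoc]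

theorem Units.conj_mul_right_eq_of_commute {R : Type*} [Monoid R] {M h : Rˣ} {J : R}
    (hhJ : Commute (h : R) J) :
    ((M * h : Rˣ) : R) * J * ↑(M * h)⁻¹ = M * J * ↑M⁻¹ := by
  simp only [mul_inv_rev, Units.val_mul, mul_assoc]
  rw [← mul_assoc (h : R) J, hhJ.eq, mul_assoc J, Units.mul_inv_cancel_left]

theorem scattering_data_right_multiplication_general {n : ℕ}
    (Lp Lm : Subgroup (Matrix (Fin n) (Fin n) ℂ)ˣ)
    (htriv : ∀ x, x ∈ Lp → x ∈ Lm → x = 1)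
    (V f h M E M' E' : (Matrix (Fin n) (Fin n) ℂ)ˣ)
    (J₁ : Matrix (Fin n) (Fin n) ℂ)
    (hh : h ∈ Lm) (hM : M ∈ Lm) (hM' : M' ∈ Lm)
    (hE : E ∈ Lp) (hE' : E' ∈ Lp)
    (hhJ : (h : Matrix (Fin n) (Fin n) ℂ) * J₁ = J₁ * (h : Matrix (Fin n) (Fin n) ℂ))
    (hhV : h * V = V * h)
    (hfac : V * f⁻¹ = M⁻¹ * E)
    (hfac' : V * (f * h)⁻¹ = M'⁻¹ * E') :
    M' = M * h ∧
    (M' : Matrix (Fin n) (Fin n) ℂ) * J₁ * (↑M'⁻¹ : Matrix (Fin n) (Fin n) ℂ) =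
      (M : Matrix (Fin n) (Fin n) ℂ) * J₁ * (↑M⁻¹ : Matrix (Fin n) (Fin n) ℂ) ∧
    ∀ proj : Matrix (Fin n) (Fin n) ℂ →ₗ[ℂ] Matrix (Fin n) (Fin n) ℂ,
      proj ((M' : Matrix (Fin n) (Fin n) ℂ) * J₁ * (↑M'⁻¹ : Matrix (Fin n) (Fin n) ℂ)) - J₁ =
        proj ((M : Matrix (Fin n) (Fin n) ℂ) * J₁ * (↑M⁻¹ : Matrix (Fin n) (Fin n) ℂ)) - J₁ := by
  have hfacMh := mul_inv_mul_right_eq_of_commute (f := f) hhV hfac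
  have hM'_eq : M' = M * h :=
    Subgroup.eq_of_inv_mul_eq_inv_mul htriv (mul_mem hM hh) hM' hE hE' (hfacMh ▸ hfac')
  subst hM'_eq
  have hconj := Units.conj_mul_right_eq_of_commute (M := M) hhJ
  exact ⟨rfl, hconj, fun proj => by rw [hconj]⟩

/-- If `h ∈ L₋` commutes with `J₁` and with `V`, and `V f⁻¹ = M⁻¹ E`,
`V (fh)⁻¹ = M̃⁻¹ Ẽ` are the unique `L₋ × L₊` factorizations, then `M̃ = M h`,
hence `M̃ J₁ M̃⁻¹ = M J₁ M⁻¹` and the formal inverse scattering solutions agree: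
`u_{fh} = (M̃ J₁ M̃⁻¹)₊ - J₁ = (M J₁ M⁻¹)₊ - J₁ = u_f`. -/
theorem scattering_data_right_multiplication {n : ℕ}
    (Lp Lm : Subgroup (Matrix (Fin n) (Fin n) ℂ)ˣ)
    (htriv : ∀ x, x ∈ Lp → x ∈ Lm → x = 1)
    (V f h M E M' E' : (Matrix (Fin n) (Fin n) ℂ)ˣ)
    (J₁ : Matrix (Fin n) (Fin n) ℂ)
    (hf : f ∈ Lm) (hh : h ∈ Lm) (hM : M ∈ Lm) (hM' : M' ∈ Lm)
    (hE : E ∈ Lp) (hE' : E' ∈ Lp)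
    (hhJ : (h : Matrix (Fin n) (Fin n) ℂ) * J₁ = J₁ * (h : Matrix (Fin n) (Fin n) ℂ))
    (hhV : h * V = V * h)
    (hfac : V * f⁻¹ = M⁻¹ * E)
    (hfac' : V * (f * h)⁻¹ = M'⁻¹ * E') :
    M' = M * h ∧
    (M' : Matrix (Fin n) (Fin n) ℂ) * J₁ * (↑M'⁻¹ : Matrix (Fin n) (Fin n) ℂ) =
      (M : Matrix (Fin n) (Fin n) ℂ) * J₁ * (↑M⁻¹ : Matrix (Fin n) (Fin n) ℂ) ∧
    ∀ proj : Matrix (Fin n) (Fin n) ℂ →ₗ[ℂ] Matrix (Fin n) (Fin n) ℂ,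
      proj ((M' : Matrix (Fin n) (Fin n) ℂ) * J₁ * (↑M'⁻¹ : Matrix (Fin n) (Fin n) ℂ)) - J₁ =
        proj ((M : Matrix (Fin n) (Fin n) ℂ) * J₁ * (↑M⁻¹ : Matrix (Fin n) (Fin n) ℂ)) - J₁ :=
  scattering_data_right_multiplication_general Lp Lm htriv V f h M E M' E' J₁ hh hM hM' hE hE' hhJ
    hhV hfac hfac'
end

section
/- Let k ∈ G commute with all J_j and with a, f ∈ L_-, and suppose conjugation by k preserves L_±. If V(t)f⁻¹ = M⁻¹E and V(t)(kfk⁻¹)⁻¹ = M̃⁻¹Ẽ are the unique L_- × L_+ factorizations, then M̃ = kMk⁻¹, Ẽ = kEk⁻¹, the solutions satisfy u_{kfk⁻¹} = k u_f k⁻¹, and ⟨M̃ J_j M̃⁻¹, a⟩ = ⟨M J_j M⁻¹, a⟩ for any ad-invariant bilinear form ⟨·,·⟩. -/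
/-!
Conjugation by `k` fixes `V(t)` and maps `V f⁻¹ = M⁻¹ E` to a factorization of
`V (kfk⁻¹)⁻¹` of the same `L₋ × L₊` shape; since `L₋ ∩ L₊` is trivial such a factorization is
unique, so `M̃ = kMk⁻¹` and `Ẽ = kEk⁻¹`. Differentiating `Ẽ = kEk⁻¹` and using that `k`
commutes with `J₁` gives `ũ = kuk⁻¹`; and since `k` commutes with `J_j` and `a`,
`⟨M̃ J_j M̃⁻¹, a⟩` is the ad-invariant pairing of `k (M J_j M⁻¹) k⁻¹` with `k a k⁻¹`.
-/

attribute [local instance] Matrix.normedAddCommGroup Matrix.normedSpace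

/-- Square matrices over `ℂ`, standing in for the loop algebra. -/
abbrev MxC (n : ℕ) := Matrix (Fin n) (Fin n) ℂ

theorem Subgroup.eq_of_inv_mul_eq_inv_mul_s19 {G : Type*} [Group G] {Lp Lm : Subgroup G}
    (hdisj : Disjoint Lm Lp) {m m' e e' : G} (hm : m ∈ Lm) (hm' : m' ∈ Lm) (he : e ∈ Lp)
    (he' : e' ∈ Lp) (h : m⁻¹ * e = m'⁻¹ * e') : m = m' ∧ e = e' := by
  have hinj := Subgroup.mul_injective_of_disjoint hdisj
    (a₁ := (⟨m⁻¹, inv_mem hm⟩, ⟨e, he⟩)) (a₂ := (⟨m'⁻¹, inv_mem hm'⟩, ⟨e', he'⟩)) h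
  simpa only [Prod.ext_iff, Subtype.ext_iff, inv_inj] using hinj

theorem inv_mul_conj_eq_of_mul_inv_eq {G : Type*} [Group G] {k v f m e : G} (hkv : Commute k v)
    (h : v * f⁻¹ = m⁻¹ * e) : v * (k * f * k⁻¹)⁻¹ = (k * m * k⁻¹)⁻¹ * (k * e * k⁻¹) := by
  calc v * (k * f * k⁻¹)⁻¹ = k * v * k⁻¹ * (k * f * k⁻¹)⁻¹ := by rw [hkv.eq, mul_inv_cancel_right]
    _ = k * (v * f⁻¹) * k⁻¹ := by group
    _ = (k * m * k⁻¹)⁻¹ * (k * e * k⁻¹) := by rw [h]; group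

theorem deriv_linearMap_comp {𝕜 E F : Type*} [NontriviallyNormedField 𝕜] [CompleteSpace 𝕜]
    [NormedAddCommGroup E] [NormedSpace 𝕜 E] [FiniteDimensional 𝕜 E]
    [NormedAddCommGroup F] [NormedSpace 𝕜 F] (l : E →ₗ[𝕜] F) {g : 𝕜 → E} {t : 𝕜}
    (hg : DifferentiableAt 𝕜 g t) : deriv (fun s => l (g s)) t = l (deriv g t) :=
  (l.toContinuousLinearMap.hasFDerivAt.comp_hasDerivAt t hg.hasDerivAt).deriv

theorem Matrix.deriv_mul_mul {𝕜 R n : Type*} [NontriviallyNormedField 𝕜] [CompleteSpace 𝕜]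
    [NormedRing R] [NormedAlgebra 𝕜 R] [FiniteDimensional 𝕜 R] [Fintype n]
    (c d : Matrix n n R) {g : 𝕜 → Matrix n n R} {t : 𝕜}
    (hg : DifferentiableAt 𝕜 g t) : deriv (fun s => c * g s * d) t = c * deriv g t * d :=
  deriv_linearMap_comp ((LinearMap.mulRight 𝕜 d).comp (LinearMap.mulLeft 𝕜 c)) hg

theorem Units.eq_conj_of_add_mul_conj_eq {A : Type*} [Ring A] {k e : Aˣ} {j x y : A}
    (hkj : Commute (k : A) j) (h : (j + y) * ↑(k * e * k⁻¹) = k * ((j + x) * e) * ↑k⁻¹) :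
    y = k * x * ↑k⁻¹ := by
  have hconj : (k : A) * (j + x) * ↑k⁻¹ = j + k * x * ↑k⁻¹ := by
    rw [mul_add, add_mul, hkj.eq, mul_assoc j, k.mul_inv, mul_one]
  have hsplit : (k : A) * ((j + x) * e) * ↑k⁻¹ = (k * (j + x) * ↑k⁻¹) * ↑(k * e * k⁻¹) := by
    simp only [Units.val_mul, mul_assoc, Units.inv_mul_cancel_left]
  rw [hsplit, Units.mul_left_inj, hconj] at h
  exact add_left_cancel h

theorem apply_units_conj_conj_eq {A β : Type*} [Monoid A] (B : A → A → β)
    (hB : ∀ (g : Aˣ) (X Y : A), B (g * X * ↑g⁻¹) (g * Y * ↑g⁻¹) = B X Y) {k m : Aˣ} {x a : A}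
    (hkx : Commute (k : A) x) (hka : Commute (k : A) a) :
    B (↑(k * m * k⁻¹) * x * ↑(k * m * k⁻¹)⁻¹) a = B (m * x * ↑m⁻¹) a := by
  have hx : ↑(k * m * k⁻¹) * x * ↑(k * m * k⁻¹)⁻¹ = k * (m * x * ↑m⁻¹) * ↑k⁻¹ := by
    simp only [mul_inv_rev, inv_inv, Units.val_mul, mul_assoc]
    rw [← mul_assoc (↑k⁻¹ : A), hkx.units_inv_left.eq, mul_assoc, Units.inv_mul_cancel_left]
  have ha : (k : A) * a * ↑k⁻¹ = a := by rw [hka.eq, mul_assoc, k.mul_inv, mul_one]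
  calc B (↑(k * m * k⁻¹) * x * ↑(k * m * k⁻¹)⁻¹) a
      = B (k * (m * x * ↑m⁻¹) * ↑k⁻¹) (k * a * ↑k⁻¹) := by rw [hx, ha]
    _ = B (m * x * ↑m⁻¹) a := hB k _ a

theorem conjugation_symmetry_of_scattering_general {n : ℕ}
    (Lp Lm : Subgroup (MxC n)ˣ)
    (htriv : ∀ x, x ∈ Lp → x ∈ Lm → x = 1)
    (k f : (MxC n)ˣ)
    (hconjp : ∀ x, x ∈ Lp → k * x * k⁻¹ ∈ Lp)
    (hconjm : ∀ x, x ∈ Lm → k * x * k⁻¹ ∈ Lm)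
    (J : ℕ → MxC n) (a : MxC n)
    (hkJ : ∀ j, (k : MxC n) * J j = J j * (k : MxC n))
    (hka : (k : MxC n) * a = a * (k : MxC n))
    (V M M' E E' : ℝ → (MxC n)ˣ)
    (hkV : ∀ t, k * V t = V t * k)
    (hmem : ∀ t, M t ∈ Lm ∧ M' t ∈ Lm ∧ E t ∈ Lp ∧ E' t ∈ Lp)
    (hfac : ∀ t, V t * f⁻¹ = (M t)⁻¹ * E t)
    (hfac' : ∀ t, V t * (k * f * k⁻¹)⁻¹ = (M' t)⁻¹ * E' t)
    (hEdiff : Differentiable ℝ (fun t => ((E t : MxC n))))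
    (u u' : ℝ → MxC n)
    (hu : ∀ t, deriv (fun s => ((E s : MxC n))) t = (J 1 + u t) * (E t : MxC n))
    (hu' : ∀ t, deriv (fun s => ((E' s : MxC n))) t = (J 1 + u' t) * (E' t : MxC n))
    (B : MxC n →ₗ[ℂ] MxC n →ₗ[ℂ] ℂ)
    (hB : ∀ (g : (MxC n)ˣ) (X Y : MxC n),
      B ((g : MxC n) * X * (↑g⁻¹ : MxC n)) ((g : MxC n) * Y * (↑g⁻¹ : MxC n)) = B X Y) :
    (∀ t, M' t = k * M t * k⁻¹ ∧ E' t = k * E t * k⁻¹) ∧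
    (∀ t, u' t = (k : MxC n) * u t * (↑k⁻¹ : MxC n)) ∧
    (∀ (t : ℝ) (j : ℕ),
      B ((↑(M' t) : MxC n) * J j * (↑(M' t)⁻¹ : MxC n)) a =
        B ((↑(M t) : MxC n) * J j * (↑(M t)⁻¹ : MxC n)) a) := by
  have hME : ∀ t, M' t = k * M t * k⁻¹ ∧ E' t = k * E t * k⁻¹ := fun t =>
    Subgroup.eq_of_inv_mul_eq_inv_mul_s19 (Subgroup.disjoint_def.mpr fun hm he => htriv _ he hm)
      (hmem t).2.1 (hconjm _ (hmem t).1) (hmem t).2.2.2 (hconjp _ (hmem t).2.2.1)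
      ((hfac' t).symm.trans (inv_mul_conj_eq_of_mul_inv_eq (hkV t) (hfac t)))
  refine ⟨hME, fun t => ?_, fun t j => ?_⟩
  · have hE' : (fun s => (E' s : MxC n)) = fun s => (k : MxC n) * E s * ↑k⁻¹ := by
      ext1 s
      rw [(hME s).2, Units.val_mul, Units.val_mul]
    have hder := Matrix.deriv_mul_mul (k : MxC n) ↑k⁻¹ (hEdiff t)
    rw [← hE', hu', hu, (hME t).2] at hder
    exact Units.eq_conj_of_add_mul_conj_eq (hkJ 1) hder
  · rw [(hME t).1]
    exact apply_units_conj_conj_eq (fun X Y => B X Y) hB (hkJ j) hka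

/-- If `k` commutes with all `J_j`, with `a` and with `V(t)`, and conjugation by
`k` preserves `L₊` and `L₋`, then from the factorizations `V f⁻¹ = M⁻¹ E` and
`V (kfk⁻¹)⁻¹ = M̃⁻¹ Ẽ` one gets `M̃ = kMk⁻¹`, `Ẽ = kEk⁻¹`, the solutions
(defined by `E_{t₁}E⁻¹ = J₁ + u`) satisfy `u_{kfk⁻¹} = k u_f k⁻¹`, and
`⟨M̃ J_j M̃⁻¹, a⟩ = ⟨M J_j M⁻¹, a⟩` for any ad-invariant bilinear form. -/
theorem conjugation_symmetry_of_scattering {n : ℕ}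
    (Lp Lm : Subgroup (MxC n)ˣ)
    (htriv : ∀ x, x ∈ Lp → x ∈ Lm → x = 1)
    (k f : (MxC n)ˣ) (hf : f ∈ Lm)
    (hconjp : ∀ x, x ∈ Lp → k * x * k⁻¹ ∈ Lp)
    (hconjm : ∀ x, x ∈ Lm → k * x * k⁻¹ ∈ Lm)
    (J : ℕ → MxC n) (a : MxC n)
    (hkJ : ∀ j, (k : MxC n) * J j = J j * (k : MxC n))
    (hka : (k : MxC n) * a = a * (k : MxC n))
    (V M M' E E' : ℝ → (MxC n)ˣ)
    (hkV : ∀ t, k * V t = V t * k)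
    (hmem : ∀ t, M t ∈ Lm ∧ M' t ∈ Lm ∧ E t ∈ Lp ∧ E' t ∈ Lp)
    (hfac : ∀ t, V t * f⁻¹ = (M t)⁻¹ * E t)
    (hfac' : ∀ t, V t * (k * f * k⁻¹)⁻¹ = (M' t)⁻¹ * E' t)
    (hEdiff : Differentiable ℝ (fun t => ((E t : MxC n))))
    (u u' : ℝ → MxC n)
    (hu : ∀ t, deriv (fun s => ((E s : MxC n))) t = (J 1 + u t) * (E t : MxC n))
    (hu' : ∀ t, deriv (fun s => ((E' s : MxC n))) t = (J 1 + u' t) * (E' t : MxC n))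
    (B : MxC n →ₗ[ℂ] MxC n →ₗ[ℂ] ℂ)
    (hB : ∀ (g : (MxC n)ˣ) (X Y : MxC n),
      B ((g : MxC n) * X * (↑g⁻¹ : MxC n)) ((g : MxC n) * Y * (↑g⁻¹ : MxC n)) = B X Y) :
    (∀ t, M' t = k * M t * k⁻¹ ∧ E' t = k * E t * k⁻¹) ∧
    (∀ t, u' t = (k : MxC n) * u t * (↑k⁻¹ : MxC n)) ∧
    (∀ (t : ℝ) (j : ℕ),
      B ((↑(M' t) : MxC n) * J j * (↑(M' t)⁻¹ : MxC n)) a =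
        B ((↑(M t) : MxC n) * J j * (↑(M t)⁻¹ : MxC n)) a) :=
  conjugation_symmetry_of_scattering_general Lp Lm htriv k f hconjp hconjm J a hkJ hka V M M' E E'
    hkV hmem hfac hfac' hEdiff u u' hu hu' B hB
end
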